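/- arXiv:1708.02332 — 4 statements merged into one kernel-verified Lean document; each statement's English description precedes it below -/
import Mathlib

section
/- Let n ≥ 3 and let F be a finite set of pairs (i,j) with 1 ≤ i < j ≤ n. Then the Lie subalgebra Lie({Ω_{ij} : (i,j) ∈ F}) equals so(n) if and only if there exists a subset S ⊆ F and an enumeration (i₁,j₁),…,(i_r,j_r) of the elements of S (each element of S listed exactly once) such that the product of transpositions (i_r,j_r)⋯(i₁,j₁) in the symmetric group S_n is an n-cycle, i.e., a cycle whose nontrivial orbit is all of {1,…,n}. -/
open Matrix

attribute [local instance 100] LieRing.ofAssociativeRing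

/-- `Ω i j = E i j - E j i` where `E i j` is the standard basis matrix. -/
noncomputable def Omega (n : ℕ) (i j : Fin n) : Matrix (Fin n) (Fin n) ℝ :=
  Matrix.single i j 1 - Matrix.single j i 1

/-- The smallest Lie subalgebra (linear subspace closed under the commutator)
of the `n × n` real matrices containing a set `S`. -/
noncomputable def lieGen (n : ℕ) (S : Set (Matrix (Fin n) (Fin n) ℝ)) :
    LieSubalgebra ℝ (Matrix (Fin n) (Fin n) ℝ) :=
  LieSubalgebra.lieSpan ℝ (Matrix (Fin n) (Fin n) ℝ) S

/-!
A generator `Ω i j` acts only on the coordinates `i, j`, and `⁅Ω i j, Ω j k⁆ = Ω i k`; hence the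
Lie algebra generated by `{Ω i j | (i, j) ∈ F}` contains every `Ω i j` with `i, j` in the same
connected component of the graph with edge set `F`, and is contained in the centralizer of the
diagonal projection onto any component. It is therefore `so(n)` exactly when this graph is
connected. A product of transpositions along edges moves each vertex within its component, so if
it is an `n`-cycle the graph is connected. Conversely, a cycle built from distinct edges can be
grown one vertex at a time: if `σ` is a cycle and the edge `(a, b)` leaves its support at `a`,
then `swap a b * σ` is a cycle whose support is that of `σ` together with `b`.
-/

open Equiv Equiv.Perm Finset

namespace Equiv.Perm

variable {α : Type*}

theorem SameCycle.rel_of_forall_rel_apply {f : Perm α} {r : α → α → Prop} (hr : Equivalence r)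
    (h : ∀ x, r x (f x)) {x y : α} (hxy : f.SameCycle x y) : r x y := by
  obtain ⟨i, rfl⟩ := hxy
  induction i using Int.induction_on with
  | zero => exact hr.refl x
  | succ i ih =>
    rw [add_comm, _root_.zpow_add, zpow_one, mul_apply]
    exact hr.trans ih (h _)
  | pred i ih =>
    rw [sub_eq_neg_add, _root_.zpow_add, _root_.zpow_neg_one, mul_apply]
    have := h (f.symm ((f ^ (-(i : ℤ))) x))
    rw [apply_symm_apply] at this
    exact hr.trans ih (hr.symm this)

variable [DecidableEq α] [Fintype α] {σ : Perm α} {a b : α}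

theorem support_swap_mul_of_mem_of_notMem (ha : a ∈ σ.support) (hb : b ∉ σ.support) :
    (swap a b * σ).support = insert b σ.support := by
  rw [mem_support] at ha
  rw [notMem_support] at hb
  have hab : a ≠ b := fun h => ha (h ▸ hb)
  have hσa : σ a ≠ b := fun h => hab (σ.injective (h.trans hb.symm))
  have hτb : (swap a b * σ) b = a := by rw [mul_apply, hb, swap_apply_right]
  have hτa : (swap a b * σ) a = σ a := by rw [mul_apply, swap_apply_of_ne_of_ne ha hσa]
  have hback : swap b a * (swap a b * σ) = σ := by rw [swap_comm, swap_mul_self_mul]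
  have h := support_swap_mul_eq (swap a b * σ) b (by rw [hτb, hτa]; exact hσa)
  rw [hτb, hback, sdiff_singleton_eq_erase] at h
  rw [h, insert_erase (mem_support.2 (hτb.trans_ne hab))]

theorem IsCycle.swap_mul_of_mem_of_notMem (hσ : σ.IsCycle) (ha : a ∈ σ.support)
    (hb : b ∉ σ.support) : (swap a b * σ).IsCycle := by
  have hsupp := support_swap_mul_of_mem_of_notMem ha hb
  rw [mem_support] at ha
  rw [notMem_support] at hb
  have hστ : ∀ x, (swap a b * σ).SameCycle x (σ x) := by
    intro x
    by_cases hx : σ x = a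
    · exact ⟨2, by simp [pow_two, mul_apply, hx, hb]⟩
    by_cases hxb : x = b
    · rw [hxb, hb]
    refine ⟨1, ?_⟩
    rw [zpow_one, mul_apply,
      swap_apply_of_ne_of_ne hx fun h => hxb (σ.injective (h.trans hb.symm))]
  have hab : a ≠ b := fun h => ha (h ▸ hb)
  have hτb : (swap a b * σ) b = a := by rw [mul_apply, hb, swap_apply_right]
  refine ⟨b, hτb.trans_ne hab, fun y hy => ?_⟩
  rw [← mem_support, hsupp, mem_insert, mem_support] at hy
  rcases hy with rfl | hy
  · exact SameCycle.rfl
  · exact SameCycle.trans ⟨1, hτb⟩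
      ((hσ.sameCycle ha hy).rel_of_forall_rel_apply (SameCycle.equivalence _) hστ)

end Equiv.Perm

section PairGraph

variable {ι : Type*} {F : Set (ι × ι)}

def graphOfPairs (F : Set (ι × ι)) : SimpleGraph ι := SimpleGraph.fromRel fun i j => (i, j) ∈ F

theorem reachable_of_mem {p : ι × ι} (hp : p ∈ F) : (graphOfPairs F).Reachable p.1 p.2 := by
  by_cases h : p.1 = p.2
  · rw [h]
  · exact SimpleGraph.Adj.reachable ((SimpleGraph.fromRel_adj _ _ _).2 ⟨h, Or.inl hp⟩)

theorem exists_crossing_pair_mem (hG : (graphOfPairs F).Preconnected) {T : Set ι}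
    {a b : ι} (ha : a ∈ T) (hb : b ∉ T) : ∃ p ∈ F, ∃ x ∈ T, ∃ y ∉ T, p = (x, y) ∨ p = (y, x) := by
  obtain ⟨w⟩ := hG a b
  obtain ⟨d, -, hd1, hd2⟩ := w.exists_boundary_dart T ha hb
  obtain ⟨-, h | h⟩ := (SimpleGraph.fromRel_adj _ _ _).1 d.adj
  · exact ⟨_, h, _, hd1, _, hd2, Or.inl rfl⟩
  · exact ⟨_, h, _, hd1, _, hd2, Or.inr rfl⟩

variable [DecidableEq ι]

def swapProd (l : List (ι × ι)) : Perm ι := (l.map fun p => swap p.1 p.2).prod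

@[simp]
theorem swapProd_cons (p : ι × ι) (l : List (ι × ι)) :
    swapProd (p :: l) = swap p.1 p.2 * swapProd l := rfl

theorem reachable_swap_apply {p : ι × ι} (hp : p ∈ F) (x : ι) :
    (graphOfPairs F).Reachable x (swap p.1 p.2 x) := by
  rw [swap_apply_def]
  split_ifs with h1 h2
  · exact h1 ▸ reachable_of_mem hp
  · exact h2 ▸ (reachable_of_mem hp).symm
  · rfl

theorem reachable_swapProd_apply {l : List (ι × ι)} (hl : ∀ p ∈ l, p ∈ F) (x : ι) :
    (graphOfPairs F).Reachable x (swapProd l x) := by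
  induction l with
  | nil => rfl
  | cons p l ih =>
    rw [swapProd_cons, mul_apply]
    exact (ih fun q hq => hl q (List.mem_cons_of_mem p hq)).trans
      (reachable_swap_apply (hl p List.mem_cons_self) _)

variable [Fintype ι]

theorem preconnected_of_isCycle_swapProd {l : List (ι × ι)} (hl : ∀ p ∈ l, p ∈ F)
    (hσ : (swapProd l).IsCycle) (hsupp : (swapProd l).support = univ) :
    (graphOfPairs F).Preconnected := fun x y =>
  (hσ.sameCycle (mem_support.1 (hsupp ▸ mem_univ x))
    (mem_support.1 (hsupp ▸ mem_univ y))).rel_of_forall_rel_apply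
    (SimpleGraph.reachable_is_equivalence _) (reachable_swapProd_apply hl)

-- Keeping all endpoints inside the support guarantees that an edge leaving the support is new.
def IsCyclicSwapList (F : Set (ι × ι)) (l : List (ι × ι)) : Prop :=
  l.Nodup ∧ (swapProd l).IsCycle ∧
    ∀ p ∈ l, p ∈ F ∧ p.1 ∈ (swapProd l).support ∧ p.2 ∈ (swapProd l).support

theorem IsCyclicSwapList.cons {l : List (ι × ι)} (hl : IsCyclicSwapList F l) {p : ι × ι}
    (hp : p ∈ F) {x y : ι} (hx : x ∈ (swapProd l).support) (hy : y ∉ (swapProd l).support)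
    (hpxy : p = (x, y) ∨ p = (y, x)) :
    IsCyclicSwapList F (p :: l) ∧
      (swapProd (p :: l)).support = insert y (swapProd l).support := by
  obtain ⟨hnd, hσ, hmem⟩ := hl
  have hswap : swapProd (p :: l) = swap x y * swapProd l := by
    rcases hpxy with rfl | rfl
    · rfl
    · rw [swapProd_cons, Equiv.swap_comm]
  have hsupp : (swapProd (p :: l)).support = insert y (swapProd l).support := by
    rw [hswap, support_swap_mul_of_mem_of_notMem hx hy]
  refine ⟨⟨?_, hswap ▸ hσ.swap_mul_of_mem_of_notMem hx hy, ?_⟩, hsupp⟩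
  · refine List.nodup_cons.2 ⟨fun hpl => ?_, hnd⟩
    rcases hpxy with rfl | rfl
    · exact hy (hmem _ hpl).2.2
    · exact hy (hmem _ hpl).2.1
  · rw [hsupp]
    rintro q (_ | ⟨_, hq⟩)
    · rcases hpxy with rfl | rfl <;> simp [hp, hx]
    · obtain ⟨hqF, hq1, hq2⟩ := hmem q hq
      exact ⟨hqF, mem_insert_of_mem hq1, mem_insert_of_mem hq2⟩

theorem exists_isCyclicSwapList_card_support (hG : (graphOfPairs F).Preconnected) {k : ℕ}
    (hk2 : 2 ≤ k) (hk : k ≤ Fintype.card ι) :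
    ∃ l, IsCyclicSwapList F l ∧ #(swapProd l).support = k := by
  induction k, hk2 using Nat.le_induction with
  | base =>
    obtain ⟨a, b, hab⟩ := Fintype.exists_pair_of_one_lt_card hk
    obtain ⟨p, hp, x, hx, y, hy, hpxy⟩ :=
      exists_crossing_pair_mem hG (Set.mem_singleton a) (Ne.symm hab)
    have hxy : x ≠ y := fun h => hy (h ▸ hx)
    have hswap : swapProd [p] = swap x y := by
      rcases hpxy with rfl | rfl
      · simp [swapProd]
      · simp [swapProd, Equiv.swap_comm]
    refine ⟨[p], ⟨List.nodup_singleton p, hswap ▸ isCycle_swap hxy, ?_⟩, ?_⟩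
    · rw [hswap, support_swap hxy]
      rintro q (_ | ⟨_, ⟨⟩⟩)
      rcases hpxy with rfl | rfl <;> simp [hp]
    · rw [hswap, card_support_swap hxy]
  | succ k hk2 ih =>
    obtain ⟨l, hl, hcard⟩ := ih (by omega)
    obtain ⟨b, hb⟩ : ∃ b, b ∉ (swapProd l).support := by
      by_contra! h
      have := card_le_card (fun b _ => h b : univ ⊆ (swapProd l).support)
      rw [card_univ] at this
      omega
    obtain ⟨a, ha⟩ := hl.2.1.nonempty_support
    obtain ⟨p, hp, x, hx, y, hy, hpxy⟩ := exists_crossing_pair_mem hG ha hb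
    obtain ⟨hl', hsupp⟩ := hl.cons hp hx hy hpxy
    exact ⟨p :: l, hl', by rw [hsupp, card_insert_of_notMem hy, hcard]⟩

end PairGraph

theorem Matrix.commute_diagonal_iff {ι R : Type*} [Fintype ι] [DecidableEq ι]
    [NonUnitalNonAssocSemiring R] {d : ι → R} {M : Matrix ι ι R} :
    Commute (diagonal d) M ↔ ∀ i j, d i * M i j = M i j * d j := by
  simp only [Commute, SemiconjBy, ← Matrix.ext_iff, diagonal_mul, mul_diagonal]

open LieAlgebra.Orthogonal

section Omega

variable {n : ℕ}

theorem omega_self (i : Fin n) : Omega n i i = 0 := sub_self _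

theorem omega_swap (i j : Fin n) : Omega n j i = -Omega n i j := (neg_sub _ _).symm

theorem omega_apply_of_ne {i j : Fin n} (h : i ≠ j) : Omega n i j i j = 1 := by
  simp [Omega, h.symm]

theorem omega_mem_so (i j : Fin n) : Omega n i j ∈ so (Fin n) ℝ := by
  rw [mem_so, Omega, transpose_sub, transpose_single, transpose_single, neg_sub]

theorem lie_omega_omega {i j k : Fin n} (hij : i ≠ j) (hjk : j ≠ k) (hik : i ≠ k) :
    ⁅Omega n i j, Omega n j k⁆ = Omega n i k := by
  simp only [Omega, Ring.lie_def, sub_mul, mul_sub, single_mul_single_same, one_mul]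
  rw [single_mul_single_of_ne (h := hjk), single_mul_single_of_ne (h := hij),
    single_mul_single_of_ne (h := hik), single_mul_single_of_ne (h := hik.symm),
    single_mul_single_of_ne (h := hjk.symm), single_mul_single_of_ne (h := hij.symm)]
  abel

theorem sum_smul_omega (M : Matrix (Fin n) (Fin n) ℝ) :
    ∑ i, ∑ j, M i j • Omega n i j = M - Mᵀ := by
  have h1 : ∑ i, ∑ j, M i j • single i j (1 : ℝ) = M := by
    conv_rhs => rw [matrix_eq_sum_single M]
    simp [smul_single]
  have h2 : ∑ i, ∑ j, M i j • single j i (1 : ℝ) = Mᵀ := by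
    rw [sum_comm]
    conv_rhs => rw [matrix_eq_sum_single Mᵀ]
    simp [smul_single]
  simp only [Omega, smul_sub, sum_sub_distrib, h1, h2]

theorem so_le_of_forall_omega_mem {L : LieSubalgebra ℝ (Matrix (Fin n) (Fin n) ℝ)}
    (h : ∀ i j, Omega n i j ∈ L) : so (Fin n) ℝ ≤ L := by
  intro M hM
  rw [mem_so] at hM
  have hM : M = (2⁻¹ : ℝ) • ∑ i, ∑ j, M i j • Omega n i j := by
    rw [sum_smul_omega, hM, sub_neg_eq_add, ← two_smul ℝ M, smul_smul,
      inv_mul_cancel₀ two_ne_zero, one_smul]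
  rw [hM]
  exact L.smul_mem _ (L.sum_mem fun i _ => L.sum_mem fun j _ => L.smul_mem _ (h i j))

theorem omega_mem_of_reachable {L : LieSubalgebra ℝ (Matrix (Fin n) (Fin n) ℝ)}
    {G : SimpleGraph (Fin n)} (hG : ∀ i j, G.Adj i j → Omega n i j ∈ L) {i j : Fin n}
    (h : G.Reachable i j) : Omega n i j ∈ L := by
  obtain ⟨w⟩ := h
  induction w with
  | nil => rw [omega_self]; exact L.zero_mem
  | @cons u v w huv _ ih =>
    by_cases huw : u = w
    · rw [huw, omega_self]; exact L.zero_mem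
    by_cases hvw : v = w
    · exact hvw ▸ hG u v huv
    rw [← lie_omega_omega huv.ne hvw huw]
    exact L.lie_mem (hG u v huv) ih

theorem commute_diagonal_omega {d : Fin n → ℝ} {i j : Fin n} (h : d i = d j) :
    Commute (diagonal d) (Omega n i j) := by
  rw [commute_diagonal_iff]
  intro a b
  simp only [Omega, Matrix.sub_apply, single_apply]
  split_ifs <;> grind

variable {F : Set (Fin n × Fin n)}

theorem omega_mem_lieGen_of_adj {i j : Fin n} (h : (graphOfPairs F).Adj i j) :
    Omega n i j ∈ lieGen n {M | ∃ p ∈ F, M = Omega n p.1 p.2} := by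
  obtain ⟨-, h | h⟩ := (SimpleGraph.fromRel_adj _ _ _).1 h
  · exact LieSubalgebra.subset_lieSpan ⟨(i, j), h, rfl⟩
  · rw [omega_swap]
    exact neg_mem (LieSubalgebra.subset_lieSpan ⟨(j, i), h, rfl⟩)

theorem lieGen_omega_eq_so_of_preconnected (hG : (graphOfPairs F).Preconnected) :
    lieGen n {M | ∃ p ∈ F, M = Omega n p.1 p.2} = so (Fin n) ℝ := by
  refine le_antisymm ?_ (so_le_of_forall_omega_mem fun i j =>
    omega_mem_of_reachable (fun _ _ => omega_mem_lieGen_of_adj) (hG i j))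
  rw [lieGen, LieSubalgebra.lieSpan_le]
  rintro _ ⟨p, -, rfl⟩
  exact omega_mem_so _ _

theorem preconnected_of_lieGen_omega_eq_so
    (h : lieGen n {M | ∃ p ∈ F, M = Omega n p.1 p.2} = so (Fin n) ℝ) :
    (graphOfPairs F).Preconnected := by
  classical
  intro i₀ j₀
  by_contra hij
  let d : Fin n → ℝ := fun x =>
    if (graphOfPairs F).connectedComponentMk i₀ = (graphOfPairs F).connectedComponentMk x then 1
    else 0
  have hle : lieGen n {M | ∃ p ∈ F, M = Omega n p.1 p.2} ≤
      lieSubalgebraOfSubalgebra ℝ _ (Subalgebra.centralizer ℝ {diagonal d}) := by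
    rw [lieGen, LieSubalgebra.lieSpan_le]
    rintro _ ⟨p, hp, rfl⟩
    have hd : d p.1 = d p.2 := by
      simp only [d, SimpleGraph.ConnectedComponent.sound (reachable_of_mem hp)]
    show _ ∈ Subalgebra.centralizer ℝ _
    rw [Subalgebra.mem_centralizer_iff]
    rintro _ rfl
    exact (commute_diagonal_omega hd).eq
  have hcomm := Subalgebra.mem_centralizer_iff ℝ |>.1 (hle (h ▸ omega_mem_so i₀ j₀)) _ rfl
  have := commute_diagonal_iff.1 hcomm i₀ j₀
  have hne : i₀ ≠ j₀ := by
    rintro rfl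
    exact hij .rfl
  rw [omega_apply_of_ne hne] at this
  simp [d, SimpleGraph.ConnectedComponent.eq, hij] at this

end Omega

theorem controllability_n_cycle_general (n : ℕ) (hn : 3 ≤ n) (F : Finset (Fin n × Fin n)) :
    (lieGen n {M | ∃ p ∈ F, M = Omega n p.1 p.2} : Set (Matrix (Fin n) (Fin n) ℝ))
        = {M | Mᵀ = -M} ↔
      ∃ S ⊆ F, ∃ l : List (Fin n × Fin n), l.Nodup ∧ l.toFinset = S ∧
        ((l.map fun p => Equiv.swap p.1 p.2).prod).IsCycle ∧
        ((l.map fun p => Equiv.swap p.1 p.2).prod).support = Finset.univ := by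
  have hso : ((so (Fin n) ℝ : LieSubalgebra ℝ _) : Set (Matrix (Fin n) (Fin n) ℝ)) =
      {M | Mᵀ = -M} := Set.ext (mem_so (Fin n) ℝ)
  rw [← hso, SetLike.coe_set_eq]
  constructor
  · intro h
    obtain ⟨l, ⟨hnd, hσ, hl⟩, hcard⟩ :=
      exists_isCyclicSwapList_card_support (preconnected_of_lieGen_omega_eq_so h)
        (k := Fintype.card (Fin n)) (by rw [Fintype.card_fin]; omega) le_rfl
    exact ⟨l.toFinset, fun p hp => (hl p (List.mem_toFinset.1 hp)).1, l, hnd, rfl, hσ,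
      eq_univ_of_card _ hcard⟩
  · rintro ⟨S, hS, l, -, rfl, hσ, hsupp⟩
    exact lieGen_omega_eq_so_of_preconnected
      (preconnected_of_isCycle_swapProd (fun p hp => hS (List.mem_toFinset.2 hp)) hσ hsupp)

theorem controllability_n_cycle (n : ℕ) (hn : 3 ≤ n) (F : Finset (Fin n × Fin n))
    (hF : ∀ p ∈ F, p.1 < p.2) :
    (lieGen n {M | ∃ p ∈ F, M = Omega n p.1 p.2} : Set (Matrix (Fin n) (Fin n) ℝ))
        = {M | Mᵀ = -M} ↔
      ∃ S ⊆ F, ∃ l : List (Fin n × Fin n), l.Nodup ∧ l.toFinset = S ∧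
        ((l.map fun p => Equiv.swap p.1 p.2).prod).IsCycle ∧
        ((l.map fun p => Equiv.swap p.1 p.2).prod).support = Finset.univ :=
  controllability_n_cycle_general n hn F
end

section
/- Let n ≥ 2 and let F = {Ω_{i₁j₁},…,Ω_{i_mj_m}} be a set of m distinct elements of the standard basis {Ω_{ij} : 1 ≤ i < j ≤ n} of so(n). If the Lie subalgebra Lie(F) equals so(n), then m ≥ n − 1. -/
open Matrix

attribute [local instance 100] LieRing.ofAssociativeRing

/-!
The graph on `{1, …, n}` whose edges are the pairs in `F` has at most `|F|` edges, so for
`|F| < n - 1` it is disconnected. If `c` labels each vertex by its connected component, every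
generator `Ω_{ij}`, `(i, j) ∈ F`, lies in the Lie subalgebra of matrices `M` with `M i j = 0`
whenever `c i ≠ c j`, hence so does `Lie(F)`; but `Ω_{ab}` for `a`, `b` in different
components does not.
-/

namespace Matrix

variable {ι R β : Type*} [Fintype ι] [CommRing R]

theorem mul_apply_eq_zero_of_fiberwise {c : ι → β} {A B : Matrix ι ι R}
    (hA : ∀ i j, c i ≠ c j → A i j = 0) (hB : ∀ i j, c i ≠ c j → B i j = 0)
    {i j : ι} (hij : c i ≠ c j) : (A * B) i j = 0 := by
  rw [mul_apply]
  refine Finset.sum_eq_zero fun k _ => ?_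
  by_cases hik : c i = c k
  · rw [hB k j (hik ▸ hij), mul_zero]
  · rw [hA i k hik, zero_mul]

def fiberwiseLieSubalgebra [DecidableEq ι] (R : Type*) [CommRing R] (c : ι → β) :
    LieSubalgebra R (Matrix ι ι R) where
  carrier := {M | ∀ i j, c i ≠ c j → M i j = 0}
  zero_mem' _ _ _ := rfl
  add_mem' hM hN i j hij := by simp [hM i j hij, hN i j hij]
  smul_mem' r M hM i j hij := by simp [hM i j hij]
  lie_mem' hM hN i j hij := by
    rw [Ring.lie_def, Matrix.sub_apply, mul_apply_eq_zero_of_fiberwise hM hN hij,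
      mul_apply_eq_zero_of_fiberwise hN hM hij, sub_zero]

end Matrix

section Omega

variable {n : ℕ}

theorem transpose_Omega (i j : Fin n) : (Omega n i j)ᵀ = -Omega n i j := by
  rw [Omega, transpose_sub, transpose_single, transpose_single, neg_sub]

theorem Omega_apply_same {a b : Fin n} (hab : a ≠ b) : Omega n a b a b = 1 := by
  simp [Omega, hab]

theorem Omega_mem_fiberwiseLieSubalgebra {β : Type*} {c : Fin n → β} {i j : Fin n}
    (hc : c i = c j) : Omega n i j ∈ Matrix.fiberwiseLieSubalgebra ℝ c := by
  intro k l hkl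
  have h₁ : ¬(i = k ∧ j = l) := by rintro ⟨rfl, rfl⟩; exact hkl hc
  have h₂ : ¬(j = k ∧ i = l) := by rintro ⟨rfl, rfl⟩; exact hkl hc.symm
  simp [Omega, single_apply_of_ne (h := h₁), single_apply_of_ne (h := h₂)]

theorem Omega_notMem_fiberwiseLieSubalgebra {β : Type*} {c : Fin n → β} {a b : Fin n}
    (hc : c a ≠ c b) : Omega n a b ∉ Matrix.fiberwiseLieSubalgebra ℝ c := fun h => by
  have hab : a ≠ b := by rintro rfl; exact hc rfl
  simpa [Omega_apply_same hab] using h a b hc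

end Omega

namespace SimpleGraph

variable {V : Type*}

def ofPairs (F : Finset (V × V)) : SimpleGraph V :=
  fromEdgeSet (Sym2.mk.uncurry '' (F : Set (V × V)))

theorem ofPairs_reachable {F : Finset (V × V)} {p : V × V} (hp : p ∈ F) :
    (ofPairs F).Reachable p.1 p.2 := by
  by_cases hp' : p.1 = p.2
  · rw [hp']
  · exact Adj.reachable ((fromEdgeSet_adj _).mpr ⟨⟨p, hp, rfl⟩, hp'⟩)

theorem card_edgeSet_ofPairs_le (F : Finset (V × V)) :
    Nat.card (ofPairs F).edgeSet ≤ F.card := by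
  rw [Nat.card_coe_set_eq, ofPairs, edgeSet_fromEdgeSet, ← Set.ncard_coe_finset F]
  exact (Set.ncard_le_ncard Set.sdiff_subset ((F.finite_toSet).image _)).trans
    (Set.ncard_image_le F.finite_toSet)

end SimpleGraph

theorem lieGen_Omega_le_fiberwiseLieSubalgebra {n : ℕ} (F : Finset (Fin n × Fin n)) :
    lieGen n {M | ∃ p ∈ F, M = Omega n p.1 p.2} ≤
      Matrix.fiberwiseLieSubalgebra ℝ (SimpleGraph.ofPairs F).connectedComponentMk := by
  refine LieSubalgebra.lieSpan_le.mpr ?_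
  rintro _ ⟨p, hp, rfl⟩
  exact Omega_mem_fiberwiseLieSubalgebra (SimpleGraph.ConnectedComponent.eq.mpr
    (SimpleGraph.ofPairs_reachable hp))

theorem controllability_needs_n_sub_one_controls_general (n : ℕ)
    (F : Finset (Fin n × Fin n))
    (h : (lieGen n {M | ∃ p ∈ F, M = Omega n p.1 p.2} : Set (Matrix (Fin n) (Fin n) ℝ))
      = {M | Mᵀ = -M}) :
    n - 1 ≤ F.card := by
  by_contra! hlt
  have hdisconn : ¬(SimpleGraph.ofPairs F).Connected := fun hconn => by
    have := hconn.card_vert_le_card_edgeSet_add_one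
    have := SimpleGraph.card_edgeSet_ofPairs_le F
    simp only [Nat.card_eq_fintype_card, Fintype.card_fin] at *
    omega
  have : Nonempty (Fin n) := ⟨⟨0, by omega⟩⟩
  obtain ⟨a, b, hab⟩ : ∃ a b, ¬(SimpleGraph.ofPairs F).Reachable a b := by
    simpa [SimpleGraph.connected_iff, SimpleGraph.Preconnected] using hdisconn
  have hmem : Omega n a b ∈ lieGen n {M | ∃ p ∈ F, M = Omega n p.1 p.2} := by
    rw [← LieSubalgebra.mem_coe, h]
    exact transpose_Omega a b
  exact Omega_notMem_fiberwiseLieSubalgebra (SimpleGraph.ConnectedComponent.eq.not.mpr hab)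
    (lieGen_Omega_le_fiberwiseLieSubalgebra F hmem)

theorem controllability_needs_n_sub_one_controls (n : ℕ) (hn : 2 ≤ n)
    (F : Finset (Fin n × Fin n)) (hF : ∀ p ∈ F, p.1 < p.2)
    (h : (lieGen n {M | ∃ p ∈ F, M = Omega n p.1 p.2} : Set (Matrix (Fin n) (Fin n) ℝ))
      = {M | Mᵀ = -M}) :
    n - 1 ≤ F.card :=
  controllability_needs_n_sub_one_controls_general n F h
end

section
/- Let σ₁,…,σ_k be transpositions in the symmetric group S_n such that the product σ_k⋯σ₁ is a cycle of length k+1 (a cycle whose support has exactly k+1 elements). Then for every permutation η of {1,…,k}, the reordered product σ_{η(k)}⋯σ_{η(1)} is also a cycle of length k+1 with the same support as σ_k⋯σ₁. -/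
/-!
Consider the graph on the points whose edges are the given transpositions. A set reachable from
`r` roots along `k` edges has at most `k + r` points, so when the product of `k` transpositions is a
`(k+1)`-cycle its support is connected by `k` edges: the graph is a tree, whatever the order of
the factors. Multiplying a permutation by a transposition `(a b)` with `a`, `b` in different cycles
merges those two cycles, so for a forest the cycles of the product, taken in any order, are exactly
the connected components of the graph.
-/

open Equiv Equiv.Perm Relation

variable {α : Type*}

/-- For an equivalence relation `r`, the equivalence relation generated by `r` and `a ~ b`. -/
def WithEdge (r : α → α → Prop) (a b : α) (x y : α) : Prop :=
  r x y ∨ ((r x a ∨ r x b) ∧ (r a y ∨ r b y))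

namespace Equiv.Perm

theorem SameCycle.of_invariant [Finite α] {f : Perm α} {p : α → Prop}
    (hp : ∀ z, p z → p (f z)) {x y : α} (h : f.SameCycle x y) (hx : p x) : p y := by
  obtain ⟨i, rfl⟩ := h.exists_nat_pow_eq
  clear h
  induction i with
  | zero => exact hx
  | succ i ih => rw [pow_succ', mul_apply]; exact hp _ ih

theorem apply_ne_self_iff_exists_sameCycle {f : Perm α} {x : α} :
    f x ≠ x ↔ ∃ y ≠ x, f.SameCycle x y :=
  ⟨fun hx => ⟨f x, hx, sameCycle_apply_right.2 .rfl⟩,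
    fun ⟨_, hyx, hxy⟩ hx => hyx (hxy.eq_of_left hx).symm⟩

theorem isCycle_iff_of_sameCycle_eq {f g : Perm α} (h : f.SameCycle = g.SameCycle) :
    f.IsCycle ↔ g.IsCycle := by
  simp only [IsCycle, apply_ne_self_iff_exists_sameCycle, h]

theorem support_eq_of_sameCycle_eq [DecidableEq α] [Fintype α] {f g : Perm α}
    (h : f.SameCycle = g.SameCycle) : f.support = g.support := by
  ext x
  simp only [mem_support, apply_ne_self_iff_exists_sameCycle, h]

theorem sameCycle_swap_mul_of_not_sameCycle [DecidableEq α] [Finite α] {f : Perm α} {a b : α}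
    (hab : ¬ f.SameCycle a b) : (swap a b * f).SameCycle a b := by
  set g := swap a b * f
  -- otherwise the `g`-orbit of `a` stays in the `f`-cycle of `a`, so it cannot return to `a`
  by_contra hg
  have hinv : ∀ z, g.SameCycle a z ∧ f.SameCycle a z →
      g.SameCycle a (g z) ∧ f.SameCycle a (g z) := by
    rintro z ⟨hgz, hfz⟩
    have hfz' : f.SameCycle a (f z) := sameCycle_apply_right.2 hfz
    refine ⟨sameCycle_apply_right.2 hgz, ?_⟩
    have hb : f z ≠ b := fun h => hab (h ▸ hfz')
    have ha : f z ≠ a := fun h => hg (by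
      have : g z = b := by simp [g, h]
      exact this ▸ sameCycle_apply_right.2 hgz)
    simpa [g, swap_apply_of_ne_of_ne ha hb] using hfz'
  obtain ⟨-, hfz⟩ :=
    (SameCycle.refl g a).symm_apply_right.of_invariant hinv ⟨.rfl, .rfl⟩
  have hb : f (g.symm a) = b := by
    have : swap a b (f (g.symm a)) = a := apply_symm_apply g a
    rwa [swap_apply_eq_iff, swap_apply_left] at this
  exact hab (hb ▸ sameCycle_apply_right.2 hfz)

theorem sameCycle_swap_mul_iff [DecidableEq α] [Finite α] {f : Perm α} {a b : α}
    (hab : ¬ f.SameCycle a b) {x y : α} :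
    (swap a b * f).SameCycle x y ↔ WithEdge f.SameCycle a b x y := by
  set g := swap a b * f
  have hgab : g.SameCycle a b := sameCycle_swap_mul_of_not_sameCycle hab
  constructor
  · -- the union of the `f`-cycles of `a` and `b` is `g`-invariant, and off it `g` agrees with `f`
    intro h
    by_cases hx : f.SameCycle x a ∨ f.SameCycle x b
    · refine .inr ⟨hx,
        h.of_invariant (p := fun z => f.SameCycle a z ∨ f.SameCycle b z) ?_ ?_⟩
      · intro z hz
        rw [← sameCycle_apply_right, ← sameCycle_apply_right (y := z)] at hz
        simp only [g, mul_apply, swap_apply_def]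
        split_ifs
        · exact .inr .rfl
        · exact .inl .rfl
        · exact hz
      · exact hx.imp SameCycle.symm SameCycle.symm
    · refine .inl (h.of_invariant (p := f.SameCycle x) (fun z hz => ?_) .rfl)
      have hfz : f.SameCycle x (f z) := sameCycle_apply_right.2 hz
      have ha : f z ≠ a := fun h => hx (.inl (h ▸ hfz))
      have hb : f z ≠ b := fun h => hx (.inr (h ▸ hfz))
      simpa [g, swap_apply_of_ne_of_ne ha hb] using hfz
  · have hle : ∀ {x y}, f.SameCycle x y → g.SameCycle x y := by
      intro x y h
      refine h.of_invariant (p := g.SameCycle x) (fun z hz => ?_) .rfl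
      have hgz : g.SameCycle x (g z) := sameCycle_apply_right.2 hz
      have hfz : f z = swap a b (g z) := by simp [g]
      rw [hfz, swap_apply_def]
      split_ifs with h1 h2
      · exact (h1 ▸ hgz).trans hgab
      · exact (h2 ▸ hgz).trans hgab.symm
      · exact hgz
    rintro (h | ⟨hx, hy⟩)
    · exact hle h
    · have hx' : g.SameCycle x a := hx.elim hle fun h => (hle h).trans hgab.symm
      have hy' : g.SameCycle a y := hy.elim hle fun h => hgab.trans (hle h)
      exact hx'.trans hy'

end Equiv.Perm

/-- `x` and `y` are joined by a path in the graph on `α` whose edges are the transpositions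
in `l`. -/
def SwapReach (l : List (Perm α)) : α → α → Prop :=
  ReflTransGen fun x y => ∃ t ∈ l, t x = y

section SwapReach

variable {l l' : List (Perm α)} {x y : α}

theorem SwapReach.mono (h : ∀ t ∈ l, t ∈ l') (hxy : SwapReach l x y) : SwapReach l' x y :=
  ReflTransGen.mono (fun _ _ ⟨t, ht, e⟩ => ⟨t, h t ht, e⟩) _ _ hxy

theorem swapReach_nil : SwapReach ([] : List (Perm α)) x y ↔ x = y := by
  rw [SwapReach, reflTransGen_iff_eq (by simp), eq_comm]

theorem SwapReach.symm [DecidableEq α] (hl : ∀ t ∈ l, t.IsSwap) (h : SwapReach l x y) :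
    SwapReach l y x := by
  induction h with
  | refl => exact .refl
  | tail _ hstep ih =>
    obtain ⟨t, ht, rfl⟩ := hstep
    obtain ⟨a, b, -, rfl⟩ := hl t ht
    exact ih.head ⟨swap a b, ht, swap_apply_self _ _ _⟩

theorem swapReach_prod_apply (l : List (Perm α)) (x : α) : SwapReach l x (l.prod x) := by
  induction l generalizing x with
  | nil => exact .refl
  | cons t l ih => exact ((ih x).mono fun _ => List.mem_cons_of_mem t).tail ⟨t, by simp, rfl⟩

theorem Equiv.Perm.SameCycle.swapReach [Finite α] (h : l.prod.SameCycle x y) : SwapReach l x y :=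
  h.of_invariant (fun z hz => hz.trans (swapReach_prod_apply l z)) .refl

theorem swapReach_cons_swap [DecidableEq α] {a b : α} :
    SwapReach (swap a b :: l) x y ↔ WithEdge (SwapReach l) a b x y := by
  constructor
  · intro h
    induction h with
    | refl => exact .inl .refl
    | @tail c _ _ hstep ih =>
      obtain ⟨s, hs, rfl⟩ := hstep
      rcases List.mem_cons.1 hs with rfl | hs
      · rw [swap_apply_def]
        split_ifs with hca hcb
        · subst hca
          exact .inr ⟨ih.elim .inl And.left, .inr .refl⟩
        · subst hcb
          exact .inr ⟨ih.elim .inr And.left, .inl .refl⟩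
        · exact ih
      · have hstep : SwapReach l c (s c) := .single ⟨s, hs, rfl⟩
        exact ih.imp (·.trans hstep) (And.imp_right (Or.imp (·.trans hstep) (·.trans hstep)))
  · have hmono : ∀ {x y}, SwapReach l x y → SwapReach (swap a b :: l) x y :=
      SwapReach.mono fun _ => List.mem_cons_of_mem _
    have hab : SwapReach (swap a b :: l) a b :=
      .single ⟨_, List.mem_cons_self, swap_apply_left a b⟩
    have hba : SwapReach (swap a b :: l) b a :=
      .single ⟨_, List.mem_cons_self, swap_apply_right a b⟩
    rintro (h | ⟨hx, hy⟩)
    · exact hmono h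
    · have hx' : SwapReach (swap a b :: l) x a := hx.elim hmono fun h => (hmono h).trans hba
      exact hy.elim (hx'.trans <| hmono ·) fun h => hx'.trans (hab.trans (hmono h))

end SwapReach

section Forest

variable [DecidableEq α] {l : List (Perm α)} {S R : Finset α}

theorem exists_insert_cover_of_cons {a b : α}
    (hcover : ∀ x ∈ S, ∃ r ∈ R, SwapReach (swap a b :: l) r x)
    (hfresh : ∃ x ∈ S, ∀ r ∈ R, ¬ SwapReach l r x) :
    ∃ c, ∀ x ∈ S, ∃ r ∈ insert c R, SwapReach l r x := by
  obtain ⟨x₀, hx₀S, hx₀⟩ := hfresh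
  obtain ⟨r₀, hr₀, h₀⟩ := hcover x₀ hx₀S
  rw [swapReach_cons_swap] at h₀
  replace h₀ := (h₀.resolve_left (hx₀ r₀ hr₀)).1
  wlog hr₀a : SwapReach l r₀ a generalizing a b
  · exact this (by rwa [swap_comm] at hcover) h₀.symm (h₀.resolve_left hr₀a)
  -- `b` becomes a new root; whatever was reached through `a` is reached from `r₀`
  refine ⟨b, fun x hx => ?_⟩
  obtain ⟨r, hr, h⟩ := hcover x hx
  rw [swapReach_cons_swap] at h
  rcases h with h | ⟨-, h | h⟩
  · exact ⟨r, Finset.mem_insert_of_mem hr, h⟩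
  · exact ⟨r₀, Finset.mem_insert_of_mem hr₀, hr₀a.trans h⟩
  · exact ⟨b, Finset.mem_insert_self b R, h⟩

theorem card_le_length_add_card (hl : ∀ t ∈ l, t.IsSwap)
    (hcover : ∀ x ∈ S, ∃ r ∈ R, SwapReach l r x) : S.card ≤ l.length + R.card := by
  induction l generalizing R with
  | nil =>
    have hSR : S ⊆ R := fun x hx => by
      obtain ⟨r, hr, h⟩ := hcover x hx
      rwa [← swapReach_nil.1 h]
    simpa using Finset.card_le_card hSR
  | cons t l ih =>
    obtain ⟨a, b, -, rfl⟩ := hl t List.mem_cons_self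
    have hl' : ∀ t ∈ l, t.IsSwap := fun t ht => hl t (List.mem_cons_of_mem _ ht)
    by_cases h : ∀ x ∈ S, ∃ r ∈ R, SwapReach l r x
    · have := ih hl' h
      simp only [List.length_cons]
      omega
    · push Not at h
      obtain ⟨c, hc⟩ := exists_insert_cover_of_cons hcover h
      have := ih hl' hc
      have := Finset.card_insert_le c R
      simp only [List.length_cons]
      omega

inductive IsSwapForest : List (Perm α) → Prop
  | nil : IsSwapForest []
  | cons {l : List (Perm α)} {a b : α} :
      IsSwapForest l → ¬ SwapReach l a b → IsSwapForest (swap a b :: l)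

theorem isSwapForest_of_card_le (hl : ∀ t ∈ l, t.IsSwap)
    (hcover : ∀ x ∈ S, ∃ r ∈ R, SwapReach l r x) (hcard : l.length + R.card ≤ S.card) :
    IsSwapForest l := by
  induction l generalizing R with
  | nil => exact .nil
  | cons t l ih =>
    obtain ⟨a, b, -, rfl⟩ := hl t List.mem_cons_self
    have hl' : ∀ t ∈ l, t.IsSwap := fun t ht => hl t (List.mem_cons_of_mem _ ht)
    simp only [List.length_cons] at hcard
    have hfresh : ∃ x ∈ S, ∀ r ∈ R, ¬ SwapReach l r x := by
      by_contra! h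
      have := card_le_length_add_card hl' h
      omega
    refine .cons ?_ fun hab => ?_
    · obtain ⟨c, hc⟩ := exists_insert_cover_of_cons hcover hfresh
      exact ih hl' hc (by have := Finset.card_insert_le c R; omega)
    · obtain ⟨x, hx, hnot⟩ := hfresh
      obtain ⟨r, hr, h⟩ := hcover x hx
      rw [swapReach_cons_swap] at h
      have hba := hab.symm hl'
      refine hnot r hr ?_
      rcases h with h | ⟨hra | hrb, hax | hbx⟩
      exacts [h, hra.trans hax, hra.trans (hab.trans hbx), hrb.trans (hba.trans hax),
        hrb.trans hbx]

theorem IsSwapForest.sameCycle_prod [Finite α] (h : IsSwapForest l) :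
    l.prod.SameCycle = SwapReach l := by
  induction h with
  | nil => funext x y; simp [swapReach_nil]
  | @cons l a b _ hab ih =>
    have hab' : ¬ l.prod.SameCycle a b := by rwa [ih]
    funext x y
    rw [List.prod_cons, propext (sameCycle_swap_mul_iff hab'), ih, propext swapReach_cons_swap]

end Forest

theorem sameCycle_prod_eq_of_perm [DecidableEq α] [Fintype α] {l l' : List (Perm α)}
    (hperm : l'.Perm l) (hl : ∀ t ∈ l, t.IsSwap) (hc : l.prod.IsCycle)
    (hcard : l.prod.support.card = l.length + 1) : l'.prod.SameCycle = l.prod.SameCycle := by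
  obtain ⟨x₀, hx₀⟩ := Finset.card_pos.1 (by omega : 0 < l.prod.support.card)
  have hreach : SwapReach l' = SwapReach l := by
    funext x y
    exact propext ⟨.mono fun _ => hperm.mem_iff.1, .mono fun _ => hperm.mem_iff.2⟩
  have hforest : ∀ m : List (Perm α), m.Perm l → IsSwapForest m := fun m hm =>
    isSwapForest_of_card_le (S := l.prod.support) (R := {x₀}) (fun t ht => hl t (hm.subset ht))
      (fun y hy => ⟨x₀, Finset.mem_singleton_self x₀, (hc.sameCycle (mem_support.1 hx₀)
        (mem_support.1 hy)).swapReach.mono fun _ => hm.mem_iff.2⟩)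
      (by rw [hm.length_eq, hcard, Finset.card_singleton])
  rw [(hforest l' hperm).sameCycle_prod, (hforest l (.refl l)).sameCycle_prod, hreach]

theorem reordered_transposition_product_is_cycle (n k : ℕ)
    (σ : Fin k → Equiv.Perm (Fin n)) (hswap : ∀ i, (σ i).IsSwap)
    (hc : ((List.ofFn σ).reverse.prod).IsCycle)
    (hcard : ((List.ofFn σ).reverse.prod).support.card = k + 1) :
    ∀ η : Equiv.Perm (Fin k),
      ((List.ofFn (σ ∘ η)).reverse.prod).IsCycle ∧
      ((List.ofFn (σ ∘ η)).reverse.prod).support =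
        ((List.ofFn σ).reverse.prod).support := by
  intro η
  have hperm : ((List.ofFn (σ ∘ η)).reverse).Perm (List.ofFn σ).reverse :=
    (List.reverse_perm _).trans ((η.ofFn_comp_perm σ).trans (List.reverse_perm _).symm)
  have hl : ∀ t ∈ (List.ofFn σ).reverse, t.IsSwap := by
    simpa [List.mem_ofFn] using hswap
  have h := sameCycle_prod_eq_of_perm hperm hl hc (by simpa using hcard)
  exact ⟨(isCycle_iff_of_sameCycle_eq h).2 hc, support_eq_of_sameCycle_eq h⟩
end

section
/- For pairwise distinct indices i, j, k ∈ {1,…,N}, the following commutator identities hold: [A_{ij}, A_{jk}] = [A_{jk}, A_{ik}] = [A_{ik}, A_{ij}] = B_{ijk}, and [A_{ij}, B_{ijk}] = 2(A_{jk} − A_{ik}), [A_{jk}, B_{ijk}] = 2(A_{ik} − A_{ij}), [A_{ik}, B_{ijk}] = 2(A_{ij} − A_{jk}). -/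
/-- `A i j = E i j + E j i - E i i - E j j`. -/
noncomputable def Amat (N : ℕ) (i j : Fin N) : Matrix (Fin N) (Fin N) ℝ :=
  Matrix.single i j 1 + Matrix.single j i 1 -
    Matrix.single i i 1 - Matrix.single j j 1

/-- `B i j k = (E i k - E k i) - (E i j - E j i) - (E j k - E k j)`. -/
noncomputable def Bmat (N : ℕ) (i j k : Fin N) : Matrix (Fin N) (Fin N) ℝ :=
  (Matrix.single i k 1 - Matrix.single k i 1) -
    (Matrix.single i j 1 - Matrix.single j i 1) -
    (Matrix.single j k 1 - Matrix.single k j 1)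

/-!
With `e i` the standard basis vectors, `A i j = -(e i - e j)(e i - e j)ᵀ` and
`B i j k = (e j - e k)(e i - e j)ᵀ - (e i - e j)(e j - e k)ᵀ`. Commutators of such rank-one
matrices are again combinations of rank-one matrices with dot products as coefficients, and for
the roots `e i - e j`, `e j - e k` these are `2` and `-1`. This gives
`⁅A i j, A j k⁆ = B i j k` and `⁅A i j, B i j k⁆ = 2 (A j k - A i k)`; the other four identities
follow from `A i j = A j i` and the cyclic invariance of `B i j k`.
-/

open Matrix

section

variable {n R : Type*} [Fintype n] [CommRing R]

theorem lie_vecMulVec_self (u w : n → R) :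
    ⁅vecMulVec u u, vecMulVec w w⁆ = (u ⬝ᵥ w) • (vecMulVec u w - vecMulVec w u) := by
  rw [Ring.lie_def, vecMulVec_mul_vecMulVec, vecMulVec_mul_vecMulVec, vecMulVec_smul,
    vecMulVec_smul, dotProduct_comm w u, smul_sub]

theorem lie_vecMulVec_self_vecMulVec_sub (u w : n → R) :
    ⁅vecMulVec u u, vecMulVec w u - vecMulVec u w⁆ =
      (2 * (u ⬝ᵥ w)) • vecMulVec u u - (u ⬝ᵥ u) • (vecMulVec u w + vecMulVec w u) := by
  simp only [Ring.lie_def, mul_sub, sub_mul, vecMulVec_mul_vecMulVec, vecMulVec_smul,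
    dotProduct_comm w u]
  module

end

section

-- Lets `neg_lie` apply to the matrix commutator. Kept local to this section, since it changes
-- the instance path of `⁅_, _⁆` on matrices.
attribute [local instance] LieRing.ofAssociativeRing

variable {N : ℕ} {i j k : Fin N}

local notation "e" i:max => (Pi.single i (1 : ℝ) : Fin N → ℝ)

theorem Amat_eq_neg_vecMulVec (i j : Fin N) :
    Amat N i j = -vecMulVec (e i - e j) (e i - e j) := by
  simp only [Amat, single_eq_single_vecMulVec_single, vecMulVec_sub, sub_vecMulVec]
  abel

theorem Bmat_eq_vecMulVec_sub (i j k : Fin N) :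
    Bmat N i j k = vecMulVec (e j - e k) (e i - e j) - vecMulVec (e i - e j) (e j - e k) := by
  simp only [Bmat, single_eq_single_vecMulVec_single, vecMulVec_sub, sub_vecMulVec]
  abel

theorem dotProduct_single_sub_single_self (hij : i ≠ j) : (e i - e j) ⬝ᵥ (e i - e j) = 2 := by
  norm_num [dotProduct_sub, hij, hij.symm]

theorem dotProduct_single_sub_single_of_ne (hij : i ≠ j) (hik : i ≠ k) (hjk : j ≠ k) :
    (e i - e j) ⬝ᵥ (e j - e k) = -1 := by
  simp [dotProduct_sub, hij, hik, hjk]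

theorem lie_Amat_Amat (hij : i ≠ j) (hik : i ≠ k) (hjk : j ≠ k) :
    ⁅Amat N i j, Amat N j k⁆ = Bmat N i j k := by
  rw [Amat_eq_neg_vecMulVec, Amat_eq_neg_vecMulVec, neg_lie, lie_neg, neg_neg, lie_vecMulVec_self,
    dotProduct_single_sub_single_of_ne hij hik hjk, Bmat_eq_vecMulVec_sub, neg_one_smul, neg_sub]

theorem lie_Amat_Bmat (hij : i ≠ j) (hik : i ≠ k) (hjk : j ≠ k) :
    ⁅Amat N i j, Bmat N i j k⁆ = 2 • (Amat N j k - Amat N i k) := by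
  have hsum : e i - e k = (e i - e j) + (e j - e k) := by abel
  rw [Amat_eq_neg_vecMulVec, Bmat_eq_vecMulVec_sub, neg_lie, lie_vecMulVec_self_vecMulVec_sub,
    dotProduct_single_sub_single_of_ne hij hik hjk, dotProduct_single_sub_single_self hij,
    Amat_eq_neg_vecMulVec, Amat_eq_neg_vecMulVec, hsum]
  simp only [add_vecMulVec, vecMulVec_add]
  module

end

theorem Amat_comm (N : ℕ) (i j : Fin N) : Amat N i j = Amat N j i := by
  rw [Amat, Amat]; abel

theorem Bmat_rotate (N : ℕ) (i j k : Fin N) : Bmat N j k i = Bmat N i j k := by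
  rw [Bmat, Bmat]; abel

theorem Amat_bracket_identities (N : ℕ) (i j k : Fin N)
    (hij : i ≠ j) (hik : i ≠ k) (hjk : j ≠ k) :
    ⁅Amat N i j, Amat N j k⁆ = Bmat N i j k ∧
    ⁅Amat N j k, Amat N i k⁆ = Bmat N i j k ∧
    ⁅Amat N i k, Amat N i j⁆ = Bmat N i j k ∧
    ⁅Amat N i j, Bmat N i j k⁆ = 2 • (Amat N j k - Amat N i k) ∧
    ⁅Amat N j k, Bmat N i j k⁆ = 2 • (Amat N i k - Amat N i j) ∧
    ⁅Amat N i k, Bmat N i j k⁆ = 2 • (Amat N i j - Amat N j k) := by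
  have hjki : Bmat N j k i = Bmat N i j k := Bmat_rotate N i j k
  have hkij : Bmat N k i j = Bmat N i j k := (Bmat_rotate N k i j).symm
  refine ⟨lie_Amat_Amat hij hik hjk, ?_, ?_, lie_Amat_Bmat hij hik hjk, ?_, ?_⟩
  · rw [Amat_comm N i k, ← hjki]
    exact lie_Amat_Amat hjk hij.symm hik.symm
  · rw [Amat_comm N i k, ← hkij]
    exact lie_Amat_Amat hik.symm hjk.symm hij
  · rw [Amat_comm N i k, Amat_comm N i j, ← hjki]
    exact lie_Amat_Bmat hjk hij.symm hik.symm
  · rw [Amat_comm N i k, Amat_comm N j k, ← hkij]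
    exact lie_Amat_Bmat hik.symm hjk.symm hij
end
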